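/- arXiv:0707.4287 — 3 statements merged into one kernel-verified Lean document; each statement's English description precedes it below -/
import Mathlib

section
/- For positive integers b and N, the set A(b,N) = {(bNu - v)/(bNu) : u, v positive integers, 0 < v ≤ bN} \ {0} satisfies the descending chain condition: every strictly decreasing sequence of elements of A(b,N) is finite. -/
/-!
An element of `A(b,N)` is `1 - v/(bNu)` with `0 < v ≤ bN`, so it is `< 1`, and it lies below a
given `a < 1` only if `1 - a ≤ v/(bNu) ≤ 1/u`, i.e. `u ≤ 1/(1 - a)`. Hence every element of
`A(b,N)` has only finitely many elements of `A(b,N)` below it, and a strictly decreasing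
sequence, which is injective and stays below its first term, cannot exist.
-/

/-- The set A(b,N) of rationals (bNu - v)/(bNu), u,v positive, 0 < v ≤ bN, excluding 0. -/
def Aset (b N : ℕ) : Set ℚ :=
  {q | (∃ u v : ℕ, 0 < u ∧ 0 < v ∧ v ≤ b * N ∧
      q = ((b : ℚ) * N * u - v) / ((b : ℚ) * N * u)) ∧ q ≠ 0}

open Set

theorem Set.isWF_of_forall_finite_inter_Iio {α : Type*} [Preorder α] {s : Set α}
    (h : ∀ a ∈ s, (s ∩ Iio a).Finite) : s.IsWF := by
  refine isWF_iff_no_descending_seq.2 fun f hf hfs => ?_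
  have hinj : (fun n => f (n + 1)).Injective := fun m n hmn => by
    simpa using hf.injective hmn
  refine infinite_range_of_injective hinj ((h (f 0) (hfs 0)).subset ?_)
  rintro _ ⟨n, rfl⟩
  exact ⟨hfs (n + 1), hf n.succ_pos⟩

theorem Aset_subset_Iio_one (b N : ℕ) : Aset b N ⊆ Iio 1 := by
  rintro q ⟨⟨u, v, hu, hv, hvle, rfl⟩, -⟩
  have hbN : (0 : ℚ) < b * N := by exact_mod_cast hv.trans_le hvle
  have hu' : (0 : ℚ) < u := by exact_mod_cast hu
  have hv' : (0 : ℚ) < v := by exact_mod_cast hv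
  rw [mem_Iio, div_lt_one (by positivity)]
  linarith

theorem Aset_inter_Iic_subset (b N : ℕ) {a : ℚ} (ha : a < 1) :
    Aset b N ∩ Iic a ⊆
      (fun p : ℕ × ℕ => ((b : ℚ) * N * p.1 - p.2) / ((b : ℚ) * N * p.1)) ''
        Icc (1, 1) (⌈1 / (1 - a)⌉₊, b * N) := by
  rintro q ⟨⟨⟨u, v, hu, hv, hvle, rfl⟩, -⟩, hqa⟩
  refine ⟨(u, v), ⟨⟨hu, hv⟩, ⟨?_, hvle⟩⟩, rfl⟩
  have hbN : (0 : ℚ) < b * N := by exact_mod_cast hv.trans_le hvle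
  have hu' : (0 : ℚ) < u := by exact_mod_cast hu
  have hvle' : (v : ℚ) ≤ b * N := by exact_mod_cast hvle
  have hva : (1 - a) * (b * N * u) ≤ v := by
    have := (div_le_iff₀ (by positivity)).1 (mem_Iic.1 hqa)
    linarith
  have hua : (u : ℚ) * (1 - a) ≤ 1 := by
    refine le_of_mul_le_mul_right ?_ hbN
    calc (u : ℚ) * (1 - a) * (b * N) = (1 - a) * (b * N * u) := by ring
      _ ≤ v := hva
      _ ≤ 1 * (b * N) := by rwa [one_mul]
  have hu_le : (u : ℚ) ≤ 1 / (1 - a) := (le_div_iff₀ (sub_pos.2 ha)).2 hua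
  exact Nat.cast_le.1 (hu_le.trans (Nat.le_ceil _))

theorem finite_Aset_inter_Iic (b N : ℕ) {a : ℚ} (ha : a < 1) : (Aset b N ∩ Iic a).Finite :=
  ((finite_Icc _ _).image _).subset (Aset_inter_Iic_subset b N ha)

theorem isWF_Aset (b N : ℕ) : (Aset b N).IsWF :=
  Set.isWF_of_forall_finite_inter_Iio fun _ ha =>
    (finite_Aset_inter_Iic b N (Aset_subset_Iio_one b N ha)).subset
      (inter_subset_inter_right _ Iio_subset_Iic_self)

theorem Aset_dcc_general (b N : ℕ) :
    ¬ ∃ f : ℕ → ℚ, (∀ n, f n ∈ Aset b N) ∧ StrictAnti f := by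
  rintro ⟨f, hfA, hf⟩
  exact isWF_iff_no_descending_seq.1 (isWF_Aset b N) f hf hfA

/-- A(b,N) satisfies the descending chain condition: there is no infinite strictly
decreasing sequence of elements of A(b,N). -/
theorem Aset_dcc (b N : ℕ) (hb : 0 < b) (hN : 0 < N) :
    ¬ ∃ f : ℕ → ℚ, (∀ n, f n ∈ Aset b N) ∧ StrictAnti f :=
  Aset_dcc_general b N
end

section
/- Let b, N, u, v be positive integers with 0 < v ≤ bN, and set β = (bNu - v)/(bNu) (a rational number). If s+1 is a positive integer divisible by Nb, then (s+1)·β ≥ ⌈s·β⌉. -/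
/-!
Write `x = (s+1)β`. Since `Nb ∣ s+1`, `u x` is an integer, so the fractional part of `x` is at
most `1 - 1/u`; as `β ≥ 1 - 1/u` (from `v ≤ bN`), `sβ = x - β ≤ ⌊x⌋`, hence `⌈sβ⌉ ≤ ⌊x⌋ ≤ x`.
-/

section FloorRing

variable {K : Type*} [Field K] [LinearOrder K] [IsStrictOrderedRing K] [FloorRing K]

theorem Int.fract_le_one_sub_inv_of_natCast_mul_eq_intCast {u : ℕ} (hu : 0 < u) {x : K}
    {n : ℤ} (hx : (u : K) * x = n) : Int.fract x ≤ 1 - (u : K)⁻¹ := by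
  have huK : (0 : K) < u := by exact_mod_cast hu
  have hmul : (u : K) * Int.fract x = ((n - u * ⌊x⌋ : ℤ) : K) := by
    rw [Int.fract, mul_sub, hx]
    push_cast
    ring
  have hlt : n - u * ⌊x⌋ < u := by
    have : (u : K) * Int.fract x < u := mul_lt_of_lt_one_right huK (Int.fract_lt_one x)
    exact_mod_cast hmul ▸ this
  have hle : (u : K) * Int.fract x ≤ u - 1 := by
    rw [hmul]
    exact_mod_cast Int.le_sub_one_of_lt hlt
  refine _root_.le_of_mul_le_mul_left ?_ huK
  rwa [mul_one_sub, mul_inv_cancel₀ huK.ne']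

theorem Int.ceil_sub_le_floor_of_natCast_mul_eq_intCast {u : ℕ} (hu : 0 < u) {x : K} {n : ℤ}
    (hx : (u : K) * x = n) {β : K} (hβ : 1 - (u : K)⁻¹ ≤ β) : ⌈x - β⌉ ≤ ⌊x⌋ := by
  have := Int.fract_le_one_sub_inv_of_natCast_mul_eq_intCast hu hx
  rw [Int.ceil_le, ← Int.self_sub_fract]
  linarith

end FloorRing

theorem ceil_le_of_dvd_general (b N u v : ℕ) (hb : 0 < b) (hN : 0 < N) (hu : 0 < u)
    (hvbN : v ≤ b * N) (s : ℕ) (hdvd : N * b ∣ s + 1)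
    (β : ℚ) (hβ : β = ((b : ℚ) * N * u - v) / ((b : ℚ) * N * u)) :
    (⌈(s : ℚ) * β⌉ : ℚ) ≤ ((s : ℚ) + 1) * β := by
  obtain ⟨k, hk⟩ := hdvd
  have hbNu : (0 : ℚ) < b * N * u := by positivity
  have hβ_lower : 1 - (u : ℚ)⁻¹ ≤ β := by
    have hv : (v : ℚ) ≤ b * N := by exact_mod_cast hvbN
    rw [hβ, le_div_iff₀ hbNu, one_sub_mul, inv_mul_eq_div, mul_div_cancel_right₀ _ (by positivity)]
    linarith
  have hmul : (u : ℚ) * ((s + 1) * β) = (((s + 1) * u - k * v : ℤ) : ℚ) := by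
    have hk' : (s : ℚ) + 1 = N * b * k := by exact_mod_cast hk
    rw [hβ]
    push_cast
    rw [hk']
    field_simp
  calc (⌈(s : ℚ) * β⌉ : ℚ) = ⌈((s : ℚ) + 1) * β - β⌉ := by ring_nf
    _ ≤ ⌊((s : ℚ) + 1) * β⌋ := by
      exact_mod_cast Int.ceil_sub_le_floor_of_natCast_mul_eq_intCast hu hmul hβ_lower
    _ ≤ ((s : ℚ) + 1) * β := Int.floor_le _

/-- If β = (bNu - v)/(bNu) with 0 < v ≤ bN, and s+1 is a positive integer divisible
by Nb, then (s+1)·β ≥ ⌈s·β⌉. -/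
theorem ceil_le_of_dvd (b N u v : ℕ) (hb : 0 < b) (hN : 0 < N) (hu : 0 < u)
    (hv : 0 < v) (hvbN : v ≤ b * N) (s : ℕ) (hs : 0 < s + 1) (hdvd : N * b ∣ s + 1)
    (β : ℚ) (hβ : β = ((b : ℚ) * N * u - v) / ((b : ℚ) * N * u)) :
    (⌈(s : ℚ) * β⌉ : ℚ) ≤ ((s : ℚ) + 1) * β :=
  ceil_le_of_dvd_general b N u v hb hN hu hvbN s hdvd β hβ
end

section
/- Let β be a rational number with 0 ≤ β ≤ 1, u a positive integer with β ≥ 1 - 1/u, and s a nonnegative integer such that u·(s+1)·β is an integer. Then (s+1)·β ≥ ⌈s·β⌉. -/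
theorem Int.cast_le_of_lt_add_one_div {K : Type*} [Field K] [LinearOrder K] [IsStrictOrderedRing K]
    {n : ℕ} (hn : 0 < n) {y : K} (hy : ∃ k : ℤ, (n : K) * y = k) {c : ℤ}
    (hc : (c : K) < y + 1 / n) : (c : K) ≤ y := by
  obtain ⟨k, hk⟩ := hy
  have hn' : (0 : K) < n := by exact_mod_cast hn
  have hlt : (n : K) * c < k + 1 := by
    calc (n : K) * c < n * (y + 1 / n) := mul_lt_mul_of_pos_left hc hn'
      _ = k + 1 := by rw [mul_add, hk, mul_one_div_cancel hn'.ne']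
  have hle : (n : ℤ) * c ≤ k := Int.lt_add_one_iff.mp (by exact_mod_cast hlt)
  refine (mul_le_mul_iff_of_pos_left hn').mp ?_
  rw [hk]
  exact_mod_cast hle

theorem ceil_le_abstract_general (β : ℚ)
    (u : ℕ) (hu : 0 < u) (hβu : 1 - 1 / (u : ℚ) ≤ β)
    (s : ℕ) (hint : ∃ k : ℤ, (u : ℚ) * ((s : ℚ) + 1) * β = (k : ℚ)) :
    (⌈(s : ℚ) * β⌉ : ℚ) ≤ ((s : ℚ) + 1) * β := by
  refine Int.cast_le_of_lt_add_one_div hu (by simpa only [mul_assoc] using hint) ?_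
  calc (⌈(s : ℚ) * β⌉ : ℚ) < s * β + 1 := Int.ceil_lt_add_one _
    _ ≤ (s + 1) * β + 1 / u := by linarith

/-- Abstract arithmetic core: if 0 ≤ β ≤ 1, β ≥ 1 - 1/u and u(s+1)β ∈ ℤ,
then (s+1)·β ≥ ⌈s·β⌉. -/
theorem ceil_le_abstract (β : ℚ) (hβ0 : 0 ≤ β) (hβ1 : β ≤ 1)
    (u : ℕ) (hu : 0 < u) (hβu : 1 - 1 / (u : ℚ) ≤ β)
    (s : ℕ) (hint : ∃ k : ℤ, (u : ℚ) * ((s : ℚ) + 1) * β = (k : ℚ)) :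
    (⌈(s : ℚ) * β⌉ : ℚ) ≤ ((s : ℚ) + 1) * β :=
  ceil_le_abstract_general β u hu hβu s hint
end
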